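/- For every integer K ≥ 1, the integer optimum L* of the spine instance equals K; it is attained by the integer length assignment giving every arc length 1, and every integer length assignment has value at least K. -/
import Mathlib


open scoped Classical BigOperators

namespace SpineInstance

/-- Vertices of the spine instance: the spine vertices `w_1, …, w_K`
(as `Sum.inl`) and the leaves `z_1, …, z_{K+1}` (as `Sum.inr`). -/
abbrev V (K : ℕ) := Fin K ⊕ Fin (K + 1)

/-- Arcs of the spine instance: the `K - 1` spine arcs `(w_j, w_{j+1})`
(as `Sum.inl`) and the `K + 1` leaf arcs, where leaf arc `i` goes from
`w_i` to `z_i` for `i ≤ K - 1` and from `w_K` to `z_{K+1}` for `i = K`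
(0-indexed: `tail (leaf i) = w_{min i (K-1)}`). -/
abbrev A (K : ℕ) := Fin (K - 1) ⊕ Fin (K + 1)

/-- The tail (source vertex) of an arc of the spine instance. The junk value
for `K = 0` is irrelevant since the theorems assume `1 ≤ K`. -/
def tail (K : ℕ) : A K → V K
  | .inl j => .inl (Fin.castLE (Nat.sub_le K 1) j)
  | .inr i =>
      if h : 1 ≤ K then .inl ⟨min i.1 (K - 1), by omega⟩
      else .inr ⟨0, by omega⟩

/-- The `i`-th path of the spine instance (`i = 0, …, K`): it follows the first
`min i (K-1)` spine arcs and then takes leaf arc `i`, thus running from `w_1`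
to the leaf `z_{i+1}`. -/
def path (K : ℕ) (i : Fin (K + 1)) : List (A K) :=
  (((List.finRange (K - 1)).take i.1).map Sum.inl) ++ [Sum.inr i]

/-- Kraft's inequality at every vertex, for an integer length assignment. -/
def KraftZ (K : ℕ) (ℓ : A K → ℤ) : Prop :=
  ∀ v : V K, ∑ a ∈ Finset.univ.filter (fun a => tail K a = v), (2 : ℝ) ^ (-ℓ a) ≤ 1

/-- Kraft's inequality at every vertex, for a real length assignment. -/
def KraftR (K : ℕ) (ℓ : A K → ℝ) : Prop :=
  ∀ v : V K, ∑ a ∈ Finset.univ.filter (fun a => tail K a = v), (2 : ℝ) ^ (-ℓ a) ≤ 1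

/-- The value of an integer length assignment: the largest encoded path length. -/
noncomputable def valueZ (K : ℕ) (ℓ : A K → ℤ) : ℤ :=
  Finset.univ.sup' Finset.univ_nonempty fun i : Fin (K + 1) => ((path K i).map ℓ).sum

/-- The value of a real length assignment: the largest encoded path length. -/
noncomputable def valueR (K : ℕ) (ℓ : A K → ℝ) : ℝ :=
  Finset.univ.sup' Finset.univ_nonempty fun i : Fin (K + 1) => ((path K i).map ℓ).sum


lemma path_len (K : ℕ) (i : Fin (K + 1)) : (path K i).length = min i.1 (K - 1) + 1 := by
  simp [path]

lemma one_le_of_kraft (K : ℕ) (hK : 1 ≤ K) (ℓ : A K → ℤ) (h : KraftZ K ℓ) (a : A K) :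
    1 ≤ ℓ a := by
  obtain ⟨b, hne, htail⟩ : ∃ b : A K, b ≠ a ∧ tail K b = tail K a := by
    rcases a with j | i
    · refine ⟨.inr ⟨j.1, by omega⟩, by simp, ?_⟩
      have := j.2
      simp only [tail, hK, dite_true, Sum.inl.injEq, Fin.ext_iff, Fin.coe_castLE]
      omega
    · by_cases h1 : i.1 < K - 1
      · refine ⟨.inl ⟨i.1, h1⟩, by simp, ?_⟩
        simp only [tail, hK, dite_true, Sum.inl.injEq, Fin.ext_iff, Fin.coe_castLE]
        omega
      · by_cases h2 : i.1 = K
        · refine ⟨.inr ⟨K - 1, by omega⟩, ?_, ?_⟩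
          · simp only [ne_eq, Sum.inr.injEq, Fin.ext_iff]; omega
          · simp only [tail, hK, dite_true, Sum.inl.injEq, Fin.ext_iff]; omega
        · refine ⟨.inr ⟨K, by omega⟩, ?_, ?_⟩
          · simp only [ne_eq, Sum.inr.injEq, Fin.ext_iff]; omega
          · have := i.2
            simp only [tail, hK, dite_true, Sum.inl.injEq, Fin.ext_iff]; omega
  have hsub : ({a, b} : Finset (A K)) ⊆ Finset.univ.filter (fun c => tail K c = tail K a) := by
    intro c hc
    simp only [Finset.mem_insert, Finset.mem_singleton] at hc
    rcases hc with rfl | rfl <;> simp [htail]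
  have hsum : (2:ℝ) ^ (-ℓ a) + (2:ℝ) ^ (-ℓ b) ≤ 1 := by
    refine le_trans ?_ (h (tail K a))
    rw [← Finset.sum_pair (f := fun c => (2:ℝ) ^ (-ℓ c)) (fun hh => hne hh.symm)]
    exact Finset.sum_le_sum_of_subset_of_nonneg hsub
      (fun i _ _ => le_of_lt (zpow_pos two_pos _))
  have hpos : (0:ℝ) < 2 ^ (-ℓ b) := zpow_pos two_pos _
  by_contra hcon
  push_neg at hcon
  have h0 : (0:ℤ) ≤ -ℓ a := by omega
  have := one_le_zpow₀ (one_le_two : (1:ℝ) ≤ 2) h0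
  linarith

lemma kraft_one (K : ℕ) (hK : 1 ≤ K) : KraftZ K (fun _ => 1) := by
  intro v
  set s := Finset.univ.filter (fun a : A K => tail K a = v) with hs
  have hcard : s.card ≤ 2 := by
    have h2 : s.card ≤ (Finset.univ : Finset Bool).card := by
      apply Finset.card_le_card_of_injOn
        (fun a : A K => match a with | .inl _ => true | .inr i => decide (i.1 = K))
        (fun _ _ => Finset.mem_univ _)
      intro a ha b hb hf
      simp only [Finset.coe_filter, Set.mem_setOf_eq, Finset.mem_univ, true_and, hs] at ha hb
      have hab : tail K a = tail K b := ha.trans hb.symm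
      rcases a with j | i <;> rcases b with j' | i'
      · simp only [tail, Sum.inl.injEq, Fin.ext_iff, Fin.coe_castLE] at hab
        simp [Fin.ext_iff, hab]
      · have := j.2
        simp only at hf
        have hiK : i'.1 = K := by simpa using hf.symm
        simp only [tail, hK, dite_true, Sum.inl.injEq, Fin.ext_iff, Fin.coe_castLE] at hab
        omega
      · have := j'.2
        simp only at hf
        have hiK : i.1 = K := by simpa using hf
        simp only [tail, hK, dite_true, Sum.inl.injEq, Fin.ext_iff, Fin.coe_castLE] at hab
        omega
      · simp only [decide_eq_decide] at hf
        have h1 := i.2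
        have h2 := i'.2
        simp only [tail, hK, dite_true, Sum.inl.injEq, Fin.ext_iff] at hab
        simp only [Sum.inr.injEq, Fin.ext_iff]
        by_cases hc : i.1 = K
        · omega
        · have : ¬ i'.1 = K := fun hh => hc (hf.mpr hh)
          omega
    simpa using h2
  have hterm : ((2:ℝ)) ^ (-(1:ℤ)) = 1/2 := by norm_num
  calc ∑ a ∈ s, (2:ℝ) ^ (-(1:ℤ)) = s.card * ((2:ℝ) ^ (-(1:ℤ))) := by
        rw [Finset.sum_const, nsmul_eq_mul]
    _ ≤ 2 * ((2:ℝ) ^ (-(1:ℤ))) := by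
        apply mul_le_mul_of_nonneg_right _ (by positivity)
        exact_mod_cast hcard
    _ = 1 := by rw [hterm]; norm_num

lemma sum_one (K : ℕ) (i : Fin (K + 1)) :
    ((path K i).map (fun _ => (1:ℤ))).sum = ((min i.1 (K - 1) + 1 : ℕ) : ℤ) := by
  rw [List.map_const', List.sum_replicate, path_len]
  simp

lemma value_one (K : ℕ) (hK : 1 ≤ K) : valueZ K (fun _ => 1) = (K : ℤ) := by
  apply le_antisymm
  · apply Finset.sup'_le
    intro i _
    rw [sum_one]
    have := i.2
    exact_mod_cast Nat.cast_le.mpr (by omega : min i.1 (K - 1) + 1 ≤ K)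
  · have h := Finset.le_sup' (f := fun i : Fin (K+1) => ((path K i).map (fun _ => (1:ℤ))).sum)
      (Finset.mem_univ (⟨K, by omega⟩ : Fin (K + 1)))
    rw [sum_one] at h
    rw [show ((⟨K, by omega⟩ : Fin (K+1)) : ℕ) = K from rfl,
      (by omega : (min K (K-1) + 1 : ℕ) = K)] at h
    exact_mod_cast h

lemma lower_bound (K : ℕ) (hK : 1 ≤ K) (ℓ : A K → ℤ) (hℓ : KraftZ K ℓ) :
    (K : ℤ) ≤ valueZ K ℓ := by
  have h1 : ∀ a, 1 ≤ ℓ a := one_le_of_kraft K hK ℓ hℓ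
  set i : Fin (K + 1) := ⟨K, by omega⟩
  have hlen : ((path K i).map ℓ).length = K := by
    rw [List.length_map, path_len]
    simp only [i]
    omega
  have hge : (K : ℤ) ≤ ((path K i).map ℓ).sum := by
    have := List.card_nsmul_le_sum ((path K i).map ℓ) 1 (by
      intro x hx
      obtain ⟨a, _, rfl⟩ := List.mem_map.1 hx
      exact h1 a)
    rw [hlen] at this
    simpa using this
  refine hge.trans ?_
  unfold valueZ
  exact Finset.le_sup' (fun i : Fin (K+1) => ((path K i).map ℓ).sum) (Finset.mem_univ i)


end SpineInstance

open SpineInstance in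
/-- For every integer `K ≥ 1`, the integer optimum `L*` of the
spine instance equals `K`; it is attained by the integer length assignment
giving every arc length `1`, and every integer length assignment has value at
least `K`. -/
theorem spine_integer_optimum (K : ℕ) (hK : 1 ≤ K) :
    KraftZ K (fun _ => 1) ∧
    valueZ K (fun _ => 1) = (K : ℤ) ∧
    (∀ ℓ : A K → ℤ, KraftZ K ℓ → (K : ℤ) ≤ valueZ K ℓ) ∧
    IsLeast {L : ℤ | ∃ ℓ : A K → ℤ, KraftZ K ℓ ∧ valueZ K ℓ = L} (K : ℤ) := by
  refine ⟨kraft_one K hK, value_one K hK, fun ℓ hℓ => lower_bound K hK ℓ hℓ,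
    ⟨fun _ => 1, kraft_one K hK, value_one K hK⟩, ?_⟩
  rintro L ⟨ℓ, hℓ, rfl⟩
  exact lower_bound K hK ℓ hℓ
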